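/- arXiv:1903.02813 — 7 statements merged into one kernel-verified Lean document; each statement's English description precedes it below -/
import Mathlib

section
/- For every natural number n, the map λ ↦ p_λ, sending a partition λ of n to the function p_λ : ℤ → ℕ defined by p_λ(k) = #{boxes s of the Young diagram of λ with content c(s) = k}, is a bijection from the set of partitions of n onto the set of integral pyramids p satisfying Σ_{k∈ℤ} p(k) = n. -/
noncomputable section
open Function

/-- An integral pyramid: finitely supported, maximal at 0, nondecreasing on ℤ≤0,
nonincreasing on ℤ≥0, with jumps of size at most 1. -/
def IsIntPyramid (p : ℤ → ℕ) : Prop :=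
  {n : ℤ | p n ≠ 0}.Finite ∧
  (∀ n, p n ≤ p 0) ∧
  (∀ ⦃m n : ℤ⦄, m ≤ n → n ≤ 0 → p m ≤ p n) ∧
  (∀ ⦃m n : ℤ⦄, 0 ≤ m → m ≤ n → p n ≤ p m) ∧
  (∀ n : ℤ, |(p n : ℤ) - (p (n + 1) : ℤ)| ≤ 1)

/-- A partition, encoded as a nonincreasing finitely supported function `l : ℕ → ℕ`,
where `l a` is the part `λ_{a+1}`. -/
def IsPartition (l : ℕ → ℕ) : Prop :=
  (∀ ⦃m n : ℕ⦄, m ≤ n → l n ≤ l m) ∧ {a : ℕ | l a ≠ 0}.Finite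

/-- The Young diagram of the partition `l`, in 1-based coordinates:
`(x, y)` with `1 ≤ y`, `1 ≤ x ≤ λ_y = l (y - 1)`. -/
def young (l : ℕ → ℕ) : Set (ℤ × ℤ) :=
  {s | 1 ≤ s.1 ∧ 1 ≤ s.2 ∧ s.1 ≤ (l ((s.2 - 1).toNat) : ℤ)}

/-- The pyramid associated with a partition: `pyrOf l k` is the number of boxes
`s = (x, y)` of the Young diagram with content `c s = x - y = k`. -/
def pyrOf (l : ℕ → ℕ) : ℤ → ℕ := fun k => {s ∈ young l | s.1 - s.2 = k}.ncard

-- ### auxiliary lemmas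

lemma interval_char {S : Set ℤ} (hS : S.Finite) (b : ℤ) (hlb : ∀ k ∈ S, b ≤ k)
    (hdc : ∀ k, b ≤ k → k + 1 ∈ S → k ∈ S) (k : ℤ) :
    k ∈ S ↔ b ≤ k ∧ k < b + S.ncard := by
  classical
  have key : ∀ n : ℕ, ∀ k, k ∈ S → b ≤ k - n → k - n ∈ S := by
    intro n
    induction n with
    | zero => intro k hk _; simpa using hk
    | succ n ih =>
      intro k hk hb
      have h1 : k - n ∈ S := ih k hk (by push_cast at hb ⊢; omega)
      have h2 : b ≤ k - (n + 1 : ℕ) := hb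
      have h3 : (k - (n + 1 : ℕ)) + 1 = k - n := by push_cast; ring
      exact hdc _ h2 (h3 ▸ h1)
  have hdown : ∀ k ∈ S, ∀ j, b ≤ j → j ≤ k → j ∈ S := by
    intro k hk j hbj hjk
    have h := key (k - j).toNat k hk (by omega)
    have : k - ((k - j).toNat : ℤ) = j := by omega
    rwa [this] at h
  rcases Set.eq_empty_or_nonempty S with rfl | hne
  · simp
  · have hT : hS.toFinset.Nonempty := by
      rwa [Set.Finite.toFinset_nonempty]
    set M := hS.toFinset.max' hT with hM
    have hMS : M ∈ S := by
      have := hS.toFinset.max'_mem hT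
      rwa [Set.Finite.mem_toFinset] at this
    have hmem : ∀ j, j ∈ S ↔ b ≤ j ∧ j ≤ M := by
      intro j
      constructor
      · intro hj
        exact ⟨hlb j hj, hS.toFinset.le_max' j (by rwa [Set.Finite.mem_toFinset])⟩
      · rintro ⟨h1, h2⟩
        exact hdown M hMS j h1 h2
    have hSeq : S = Set.Icc b M := by
      ext j; simpa [Set.mem_Icc] using hmem j
    have hbM : b ≤ M := hlb M hMS
    have hcard : S.ncard = (M + 1 - b).toNat := by
      rw [hSeq, ← Finset.coe_Icc, Set.ncard_coe_finset, Int.card_Icc]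
    rw [hmem k, hcard]
    omega

lemma nat_le_ext {A B : ℕ} (h : ∀ m : ℤ, 1 ≤ m → ((m ≤ (A:ℤ)) ↔ (m ≤ (B:ℤ)))) : A = B := by
  rcases Nat.eq_zero_or_pos A with hA | hA
  · rcases Nat.eq_zero_or_pos B with hB | hB
    · omega
    · have := (h B (by exact_mod_cast hB)).mpr le_rfl; omega
  · rcases Nat.eq_zero_or_pos B with hB | hB
    · have := (h A (by exact_mod_cast hA)).mp le_rfl; omega
    · have h1 := (h A (by exact_mod_cast hA)).mp le_rfl
      have h2 := (h B (by exact_mod_cast hB)).mpr le_rfl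
      omega

lemma fiber_sum {α β : Type*} {Y : Set α} (hY : Y.Finite) (f : α → β) :
    ∑ᶠ b, {s ∈ Y | f s = b}.ncard = Y.ncard := by
  classical
  have hfin : ∀ b, {s ∈ Y | f s = b} = ↑(hY.toFinset.filter (fun s => f s = b)) := by
    intro b; ext s; simp [Set.Finite.mem_toFinset]
  have hsupp : (Function.support fun b => {s ∈ Y | f s = b}.ncard) ⊆ ↑(hY.toFinset.image f) := by
    intro b hb
    simp only [Function.mem_support, ne_eq] at hb
    have : {s ∈ Y | f s = b}.Nonempty := by
      by_contra hc
      rw [Set.not_nonempty_iff_eq_empty] at hc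
      simp [hc] at hb
    obtain ⟨s, hs, hfs⟩ := this
    simp only [Finset.coe_image, Set.mem_image, Finset.mem_coe, Set.Finite.mem_toFinset]
    exact ⟨s, hs, hfs⟩
  rw [finsum_eq_finset_sum_of_support_subset _ hsupp]
  have : ∀ b ∈ hY.toFinset.image f, {s ∈ Y | f s = b}.ncard
      = ((hY.toFinset.filter (fun s => f s = b)).card) := by
    intro b _; rw [hfin b, Set.ncard_coe_finset]
  rw [Finset.sum_congr rfl this]
  rw [← Finset.card_eq_sum_card_fiberwise (fun x hx => Finset.mem_image_of_mem f hx)]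
  rw [← Set.ncard_coe_finset hY.toFinset, Set.Finite.coe_toFinset]

-- ### core
def Mset (l : ℕ → ℕ) (k : ℤ) : Set ℤ :=
  {m : ℤ | 1 ≤ m ∧ m + max k 0 ≤ (l ((m + max (-k) 0 - 1).toNat) : ℤ)}

def phi (k : ℤ) : ℤ → ℤ × ℤ := fun m => (m + max k 0, m + max (-k) 0)

lemma phi_inj (k : ℤ) : Injective (phi k) := by
  intro a b h
  have := congrArg Prod.fst h
  simpa [phi] using this

lemma young_finite {l : ℕ → ℕ} (hl : IsPartition l) : (young l).Finite := by
  obtain ⟨L, hL⟩ := hl.2.bddAbove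
  apply Set.Finite.subset ((Set.finite_Icc (1:ℤ) (l 0)).prod (Set.finite_Icc (1:ℤ) (L+1)))
  rintro ⟨x, y⟩ ⟨hx, hy, hxl⟩
  simp only at hx hy hxl
  constructor
  · refine ⟨hx, le_trans hxl ?_⟩
    exact_mod_cast hl.1 (Nat.zero_le _)
  · refine ⟨hy, ?_⟩
    by_contra hc
    push_neg at hc
    have hidx : L < (y - 1).toNat := by omega
    have : l ((y - 1).toNat) = 0 := by
      by_contra h0
      exact absurd (hL h0) (by omega)
    omega

lemma diag_eq_image (l : ℕ → ℕ) (k : ℤ) :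
    {s ∈ young l | s.1 - s.2 = k} = phi k '' Mset l k := by
  ext ⟨x, y⟩
  constructor
  · rintro ⟨⟨hx, hy, hxl⟩, hk⟩
    simp only at hx hy hxl hk
    have h1 : min x y + max k 0 = x := by omega
    have h2 : min x y + max (-k) 0 = y := by omega
    refine ⟨min x y, ⟨by omega, ?_⟩, ?_⟩
    · rw [h1, h2]; exact hxl
    · simp only [phi, h1, h2]
  · rintro ⟨m, ⟨hm, hcond⟩, heq⟩
    obtain ⟨hx, hy⟩ : m + max k 0 = x ∧ m + max (-k) 0 = y := by
      constructor <;> [exact congrArg Prod.fst heq; exact congrArg Prod.snd heq]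
    subst hx; subst hy
    exact ⟨⟨by omega, by omega, hcond⟩, by omega⟩

lemma Mset_eq_preimage (l : ℕ → ℕ) (k : ℤ) :
    Mset l k = phi k ⁻¹' {s ∈ young l | s.1 - s.2 = k} := by
  ext m
  simp only [Mset, Set.mem_setOf_eq, Set.mem_preimage, phi, young]
  constructor
  · rintro ⟨hm, hc⟩
    exact ⟨⟨by omega, by omega, hc⟩, by omega⟩
  · rintro ⟨⟨h1, h2, hc⟩, _⟩
    exact ⟨by omega, hc⟩

lemma Mset_finite {l : ℕ → ℕ} (hl : IsPartition l) (k : ℤ) : (Mset l k).Finite := by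
  rw [Mset_eq_preimage]
  exact Set.Finite.preimage (phi_inj k).injOn
    (((young_finite hl).subset (Set.sep_subset _ _)))

lemma pyr_eq_ncard_Mset (l : ℕ → ℕ) (k : ℤ) : pyrOf l k = (Mset l k).ncard := by
  rw [pyrOf, diag_eq_image, Set.ncard_image_of_injective _ (phi_inj k)]

lemma mem_Mset_iff {l : ℕ → ℕ} (hl : IsPartition l) (k m : ℤ) :
    m ∈ Mset l k ↔ 1 ≤ m ∧ m ≤ (pyrOf l k : ℤ) := by
  rw [pyr_eq_ncard_Mset]
  have h := interval_char (Mset_finite hl k) 1 (fun j hj => hj.1) ?_ m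
  · rw [h]; omega
  · rintro j hj ⟨_, hc⟩
    refine ⟨hj, ?_⟩
    have hmono : l ((j + max (-k) 0 - 1).toNat) ≥ l ((j + 1 + max (-k) 0 - 1).toNat) :=
      hl.1 (by omega)
    have : (l ((j + 1 + max (-k) 0 - 1).toNat) : ℤ) ≤ (l ((j + max (-k) 0 - 1).toNat) : ℤ) := by
      exact_mod_cast hmono
    omega

/-- Key membership characterization. -/
lemma memY_iff {l : ℕ → ℕ} (hl : IsPartition l) {x y : ℤ} (hx : 1 ≤ x) (hy : 1 ≤ y) :
    x ≤ (l ((y - 1).toNat) : ℤ) ↔ min x y ≤ (pyrOf l (x - y) : ℤ) := by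
  set k := x - y with hk
  have h1 : min x y + max k 0 = x := by omega
  have h2 : min x y + max (-k) 0 = y := by omega
  have := mem_Mset_iff hl k (min x y)
  simp only [Mset, Set.mem_setOf_eq, h1] at this
  rw [show min x y + max (-k) 0 - 1 = y - 1 by omega] at this
  have hm1 : (1:ℤ) ≤ x ⊓ y := by omega
  constructor
  · intro h; exact (this.mp ⟨hm1, h⟩).2
  · intro h; exact (this.mpr ⟨hm1, h⟩).2

section Steps
variable {l : ℕ → ℕ} (hl : IsPartition l)
include hl

lemma pyr_step_right (k : ℤ) (hk : 0 ≤ k) : pyrOf l (k + 1) ≤ pyrOf l k := by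
  by_cases h0 : pyrOf l (k + 1) = 0
  · omega
  set m : ℤ := (pyrOf l (k + 1) : ℤ) with hmdef
  have hm : (1:ℤ) ≤ m := by simp [hmdef]; omega
  have h1 := memY_iff hl (x := m + (k + 1)) (y := m) (by omega) hm
  rw [show m + (k + 1) - m = k + 1 by ring, show min (m + (k + 1)) m = m by omega] at h1
  have h2 := h1.mpr le_rfl
  have h3 := memY_iff hl (x := m + k) (y := m) (by omega) hm
  rw [show m + k - m = k by ring, show min (m + k) m = m by omega] at h3
  have := h3.mp (by omega)
  omega

lemma pyr_step_right' (k : ℤ) (hk : 0 ≤ k) : pyrOf l k ≤ pyrOf l (k + 1) + 1 := by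
  by_cases h0 : pyrOf l k ≤ 1
  · omega
  set m : ℤ := (pyrOf l k : ℤ) with hmdef
  have hm : (2:ℤ) ≤ m := by simp [hmdef]; omega
  have h1 := memY_iff hl (x := m + k) (y := m) (by omega) (by omega)
  rw [show m + k - m = k by ring, show min (m + k) m = m by omega] at h1
  have h2 := h1.mpr le_rfl
  have hmono : (l ((m - 1 - 1).toNat) : ℤ) ≥ (l ((m - 1).toNat) : ℤ) := by
    exact_mod_cast hl.1 (show (m - 1 - 1).toNat ≤ (m - 1).toNat by omega)
  have h3 := memY_iff hl (x := m + k) (y := m - 1) (by omega) (by omega)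
  rw [show m + k - (m - 1) = k + 1 by ring, show min (m + k) (m - 1) = m - 1 by omega] at h3
  have := h3.mp (by omega)
  omega

lemma pyr_step_left (k : ℤ) (hk : k ≤ -1) : pyrOf l k ≤ pyrOf l (k + 1) := by
  by_cases h0 : pyrOf l k = 0
  · omega
  set m : ℤ := (pyrOf l k : ℤ) with hmdef
  have hm : (1:ℤ) ≤ m := by simp [hmdef]; omega
  have h1 := memY_iff hl (x := m) (y := m - k) (by omega) (by omega)
  rw [show m - (m - k) = k by ring, show min m (m - k) = m by omega] at h1
  have h2 := h1.mpr le_rfl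
  have hmono : (l ((m - k - 1 - 1).toNat) : ℤ) ≥ (l ((m - k - 1).toNat) : ℤ) := by
    exact_mod_cast hl.1 (show (m - k - 1 - 1).toNat ≤ (m - k - 1).toNat by omega)
  have h3 := memY_iff hl (x := m) (y := m - k - 1) (by omega) (by omega)
  rw [show m - (m - k - 1) = k + 1 by ring, show min m (m - k - 1) = m by omega] at h3
  have := h3.mp (by omega)
  omega

lemma pyr_step_left' (k : ℤ) (hk : k ≤ -1) : pyrOf l (k + 1) ≤ pyrOf l k + 1 := by
  by_cases h0 : pyrOf l (k + 1) ≤ 1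
  · omega
  set m : ℤ := (pyrOf l (k + 1) : ℤ) with hmdef
  have hm : (2:ℤ) ≤ m := by simp [hmdef]; omega
  have h1 := memY_iff hl (x := m) (y := m - k - 1) (by omega) (by omega)
  rw [show m - (m - k - 1) = k + 1 by ring, show min m (m - k - 1) = m by omega] at h1
  have h2 := h1.mpr le_rfl
  have h3 := memY_iff hl (x := m - 1) (y := m - 1 - k) (by omega) (by omega)
  rw [show m - 1 - (m - 1 - k) = k by ring, show min (m - 1) (m - 1 - k) = m - 1 by omega] at h3
  have hidx : (m - 1 - k - 1).toNat = (m - k - 1 - 1).toNat := by omega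
  rw [hidx] at h3
  have := h3.mp (by omega)
  omega

lemma pyr_mono_left : ∀ ⦃a b : ℤ⦄, a ≤ b → b ≤ 0 → pyrOf l a ≤ pyrOf l b := by
  have key : ∀ d : ℕ, ∀ b : ℤ, b ≤ 0 → pyrOf l (b - d) ≤ pyrOf l b := by
    intro d
    induction d with
    | zero => intro b _; simp
    | succ d ih =>
      intro b hb
      have h1 : pyrOf l (b - (d + 1 : ℕ)) ≤ pyrOf l (b - d) := by
        have := pyr_step_left hl (b - (d + 1 : ℕ)) (by push_cast; omega)
        rwa [show b - (d + 1 : ℕ) + 1 = b - d by push_cast; ring] at this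
      exact le_trans h1 (ih b hb)
  intro a b hab hb
  have := key (b - a).toNat b hb
  rwa [show b - ((b - a).toNat : ℤ) = a by omega] at this

lemma pyr_mono_right : ∀ ⦃a b : ℤ⦄, 0 ≤ a → a ≤ b → pyrOf l b ≤ pyrOf l a := by
  have key : ∀ d : ℕ, ∀ a : ℤ, 0 ≤ a → pyrOf l (a + d) ≤ pyrOf l a := by
    intro d
    induction d with
    | zero => intro a _; simp
    | succ d ih =>
      intro a ha
      have h1 : pyrOf l (a + (d + 1 : ℕ)) ≤ pyrOf l (a + d) := by
        have := pyr_step_right hl (a + d) (by omega)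
        rwa [show a + d + 1 = a + (d + 1 : ℕ) by push_cast; ring] at this
      exact le_trans h1 (ih a ha)
  intro a b ha hab
  have := key (b - a).toNat a ha
  rwa [show a + ((b - a).toNat : ℤ) = b by omega] at this

lemma pyr_max (n : ℤ) : pyrOf l n ≤ pyrOf l 0 := by
  rcases le_or_gt n 0 with h | h
  · exact pyr_mono_left hl h le_rfl
  · exact pyr_mono_right hl le_rfl h.le

lemma pyr_jump (n : ℤ) : |(pyrOf l n : ℤ) - (pyrOf l (n + 1) : ℤ)| ≤ 1 := by
  rw [abs_le]
  rcases le_or_gt 0 n with h | h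
  · have := pyr_step_right hl n h
    have := pyr_step_right' hl n h
    omega
  · have := pyr_step_left hl n (by omega)
    have := pyr_step_left' hl n (by omega)
    omega


lemma pyr_supp : {k : ℤ | pyrOf l k ≠ 0}.Finite := by
  apply ((young_finite hl).image (fun s => s.1 - s.2)).subset
  intro k hk
  obtain ⟨s, hs⟩ := Set.nonempty_of_ncard_ne_zero hk
  exact ⟨s, hs.1, hs.2⟩

lemma pyr_isPyramid : IsIntPyramid (pyrOf l) :=
  ⟨pyr_supp hl, pyr_max hl, pyr_mono_left hl, pyr_mono_right hl, pyr_jump hl⟩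

end Steps

lemma row_ncard (l : ℕ → ℕ) (a : ℕ) :
    {s ∈ young l | (s.2 - 1).toNat = a}.ncard = l a := by
  have himg : {s ∈ young l | (s.2 - 1).toNat = a}
      = (fun x : ℤ => (x, (a:ℤ) + 1)) '' (Set.Icc 1 (l a : ℤ)) := by
    ext ⟨x, y⟩
    simp only [young, Set.mem_setOf_eq, Set.mem_image, Set.mem_Icc]
    constructor
    · rintro ⟨⟨hx, hy, hxl⟩, ha⟩
      have hy2 : y = (a:ℤ) + 1 := by omega
      subst hy2
      rw [show ((a:ℤ) + 1 - 1).toNat = a by omega] at hxl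
      exact ⟨x, ⟨hx, hxl⟩, rfl⟩
    · rintro ⟨x', ⟨h1, h2⟩, heq⟩
      obtain ⟨rfl, rfl⟩ : x' = x ∧ ((a:ℤ) + 1) = y := by
        constructor
        · exact congrArg Prod.fst heq
        · exact congrArg Prod.snd heq
      refine ⟨⟨h1, by omega, ?_⟩, by omega⟩
      rw [show ((a:ℤ) + 1 - 1).toNat = a by omega]; exact h2
  rw [himg, Set.ncard_image_of_injective _ (fun x1 x2 h => congrArg Prod.fst h),
    ← Finset.coe_Icc, Set.ncard_coe_finset, Int.card_Icc]
  omega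

lemma sum_pyr {l : ℕ → ℕ} (hl : IsPartition l) :
    ∑ᶠ k : ℤ, pyrOf l k = ∑ᶠ a : ℕ, l a := by
  have h1 : ∑ᶠ k : ℤ, pyrOf l k = (young l).ncard :=
    fiber_sum (young_finite hl) (fun s => s.1 - s.2)
  have h2 : ∑ᶠ a : ℕ, l a = (young l).ncard := by
    rw [← fiber_sum (young_finite hl) (fun s => (s.2 - 1).toNat)]
    exact finsum_congr fun a => (row_ncard l a).symm
  rw [h1, h2]

-- inverse construction
def setA (p : ℤ → ℕ) (a : ℕ) : Set ℤ :=
  {k : ℤ | -(a:ℤ) ≤ k ∧ min ((a:ℤ) + 1) ((a:ℤ) + 1 + k) ≤ (p k : ℤ)}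

def invP (p : ℤ → ℕ) : ℕ → ℕ := fun a => (setA p a).ncard

lemma setA_finite {p : ℤ → ℕ} (hp : IsIntPyramid p) (a : ℕ) : (setA p a).Finite := by
  apply hp.1.subset
  rintro k ⟨h1, h2⟩
  simp only [Set.mem_setOf_eq]
  intro h0
  rw [h0] at h2
  push_cast at h2
  omega

lemma mem_setA_iff {p : ℤ → ℕ} (hp : IsIntPyramid p) (a : ℕ) (k : ℤ) :
    k ∈ setA p a ↔ -(a:ℤ) ≤ k ∧ k < -(a:ℤ) + invP p a := by
  apply interval_char (setA_finite hp a) _ (fun j hj => hj.1)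
  rintro j hj ⟨_, hc⟩
  refine ⟨hj, ?_⟩
  rcases le_or_gt 0 j with h | h
  · have hmono := hp.2.2.2.1 h (le_of_lt (lt_add_one j))
    omega
  · have hjump := hp.2.2.2.2 j
    rw [abs_le] at hjump
    omega

lemma invP_mono {p : ℤ → ℕ} (hp : IsIntPyramid p) :
    ∀ ⦃a b : ℕ⦄, a ≤ b → invP p b ≤ invP p a := by
  have step : ∀ a : ℕ, invP p (a + 1) ≤ invP p a := by
    intro a
    have hsub : (fun k => k + 1) '' setA p (a + 1) ⊆ setA p a := by
      rintro _ ⟨k, ⟨h1, h2⟩, rfl⟩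
      push_cast at h1 h2 ⊢
      refine ⟨by omega, ?_⟩
      rcases le_or_gt 0 k with h | h
      · have hjump := hp.2.2.2.2 k
        rw [abs_le] at hjump
        omega
      · have hmono := hp.2.2.1 (le_of_lt (lt_add_one k)) (by omega)
        omega
    calc invP p (a + 1) = ((fun k => k + 1) '' setA p (a + 1)).ncard :=
          (Set.ncard_image_of_injective _ (add_left_injective 1)).symm
      _ ≤ (setA p a).ncard := Set.ncard_le_ncard hsub (setA_finite hp a)
  intro a b hab
  induction b, hab using Nat.le_induction with
  | base => exact le_rfl
  | succ b hb ih => exact le_trans (step b) ih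

lemma invP_supp {p : ℤ → ℕ} (hp : IsIntPyramid p) : {a : ℕ | invP p a ≠ 0}.Finite := by
  have hsub : {a : ℕ | invP p a ≠ 0} ⊆ (fun a : ℕ => -(a:ℤ)) ⁻¹' {k | p k ≠ 0} := by
    intro a ha
    simp only [Set.mem_setOf_eq] at ha ⊢
    have hmem : -(a:ℤ) ∈ setA p a := by
      rw [mem_setA_iff hp]
      omega
    intro h0
    have h2 := hmem.2
    rw [h0] at h2
    push_cast at h2
    omega
  exact (hp.1.preimage (fun a _ b _ h => by omega)).subset hsub

lemma pyrOf_invP {p : ℤ → ℕ} (hp : IsIntPyramid p) (hpart : IsPartition (invP p)) :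
    pyrOf (invP p) = p := by
  funext k
  apply nat_le_ext
  intro m hm
  have h1 : min (m + max k 0) (m + max (-k) 0) = m := by omega
  have h2 : (m + max k 0) - (m + max (-k) 0) = k := by omega
  have hY := memY_iff hpart (x := m + max k 0) (y := m + max (-k) 0) (by omega) (by omega)
  rw [h1, h2] at hY
  rw [← hY]
  set a := (m + max (-k) 0 - 1).toNat with hadef
  have haz : (a:ℤ) = m + max (-k) 0 - 1 := by omega
  have hs := mem_setA_iff hp a k
  simp only [setA, Set.mem_setOf_eq] at hs
  rw [haz] at hs
  have hrfl : invP p a = (setA p a).ncard := rfl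
  show m + max k 0 ≤ ((invP p) a : ℤ) ↔ _
  rw [invP]
  omega

/-- for every `n`, the map `λ ↦ p_λ` is a bijection from the set of partitions
of `n` onto the set of integral pyramids of total size `n`. -/
theorem partition_pyramid_bijection (n : ℕ) :
    Set.BijOn pyrOf
      {l : ℕ → ℕ | IsPartition l ∧ ∑ᶠ a : ℕ, l a = n}
      {p : ℤ → ℕ | IsIntPyramid p ∧ ∑ᶠ k : ℤ, p k = n} := by
  refine ⟨?_, ?_, ?_⟩
  · rintro l ⟨hl, hsum⟩
    exact ⟨pyr_isPyramid hl, by rw [sum_pyr hl, hsum]⟩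
  · rintro l1 ⟨hl1, _⟩ l2 ⟨hl2, _⟩ heq
    funext a
    apply nat_le_ext
    intro m hm
    have e1 := memY_iff hl1 (x := m) (y := (a:ℤ) + 1) hm (by omega)
    have e2 := memY_iff hl2 (x := m) (y := (a:ℤ) + 1) hm (by omega)
    rw [show ((a:ℤ) + 1 - 1).toNat = a by omega] at e1 e2
    rw [e1, heq, ← e2]
  · rintro p ⟨hp, hsum⟩
    have hpart : IsPartition (invP p) := ⟨invP_mono hp, invP_supp hp⟩
    have hpy := pyrOf_invP hp hpart
    refine ⟨invP p, ⟨hpart, ?_⟩, hpy⟩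
    rw [← sum_pyr hpart, hpy, hsum]
end
end

section
/- Let λ and μ be partitions of the same natural number n. Then λ dominates μ (i.e. λ_1 + ⋯ + λ_a ≥ μ_1 + ⋯ + μ_a for all a ≥ 1) if and only if for every m ∈ ℕ one has Σ_{k∈ℤ} min(p_λ(k), κ_m(k)) ≥ Σ_{k∈ℤ} min(p_μ(k), κ_m(k)), where κ_m : ℤ → ℕ is defined by κ_m(i) = m if i ≥ 0, κ_m(i) = m + i if −m < i < 0, and κ_m(i) = 0 if i ≤ −m. -/
/-
The boxes of content `k` of a Young diagram lie in consecutive rows, starting at row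
`max 1 (1 - k)`, and `κ_m(k)` is exactly the number of rows from `max 1 (1 - k)` to `m`.
Hence `min (p_λ(k), κ_m(k))` counts the boxes of content `k` in the first `m` rows, and summing
over `k` gives `λ_1 + ⋯ + λ_m`. Both conditions therefore compare the same partial sums.
-/

noncomputable section
open Function

/-- The cut-off function `κ_m : ℤ → ℕ`. -/
def kappa (m : ℕ) (i : ℤ) : ℕ :=
  if 0 ≤ i then m else if -(m : ℤ) < i then ((m : ℤ) + i).toNat else 0

open Set

def diagonalBox (k y : ℤ) : ℤ × ℤ := (y + k, y)

lemma diagonalBox_injective (k : ℤ) : Injective (diagonalBox k) :=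
  fun _ _ h => (Prod.ext_iff.mp h).2

/-- The rows `y` of the Young diagram of `l` that contain a box of content `k`. -/
def diagonalRows (l : ℕ → ℕ) (k : ℤ) : Set ℤ :=
  {y | 1 ≤ y ∧ 1 ≤ y + k ∧ y + k ≤ (l (y - 1).toNat : ℤ)}

lemma young_diagonal_eq_image (l : ℕ → ℕ) (k : ℤ) :
    {s ∈ young l | s.1 - s.2 = k} = diagonalBox k '' diagonalRows l k := by
  ext ⟨x, y⟩
  simp only [young, diagonalRows, diagonalBox, mem_ofPred_eq, mem_image, Prod.mk.injEq]
  constructor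
  · rintro ⟨⟨hx, hy, hxl⟩, rfl⟩
    exact ⟨y, ⟨hy, by omega, by simpa using hxl⟩, by ring, rfl⟩
  · rintro ⟨y, ⟨hy, hyk, hyl⟩, rfl, rfl⟩
    exact ⟨⟨hyk, hy, hyl⟩, by ring⟩

lemma pyrOf_eq_ncard_diagonalRows (l : ℕ → ℕ) (k : ℤ) :
    pyrOf l k = (diagonalRows l k).ncard := by
  rw [pyrOf, young_diagonal_eq_image,
    ncard_image_of_injective _ (diagonalBox_injective k)]

lemma diagonalRows_finite {l : ℕ → ℕ} (hl : {a | l a ≠ 0}.Finite) (k : ℤ) :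
    (diagonalRows l k).Finite := by
  refine (hl.image fun a : ℕ => (a : ℤ) + 1).subset ?_
  rintro y ⟨hy, hyk, hyl⟩
  exact ⟨(y - 1).toNat, by simp only [mem_ofPred_eq]; omega,
    show ((y - 1).toNat : ℤ) + 1 = y by omega⟩

lemma diagonalRows_subset_Ici (l : ℕ → ℕ) (k : ℤ) :
    diagonalRows l k ⊆ Ici (max 1 (1 - k)) := by
  rintro y ⟨hy, hyk, -⟩
  simp only [mem_Ici, max_le_iff]
  omega

lemma Icc_subset_diagonalRows {l : ℕ → ℕ} (hl : Antitone l) {k y : ℤ}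
    (hy : y ∈ diagonalRows l k) : Icc (max 1 (1 - k)) y ⊆ diagonalRows l k := by
  obtain ⟨-, -, hyl⟩ := hy
  rintro z ⟨hz, hzy⟩
  rw [max_le_iff] at hz
  have : (l (y - 1).toNat : ℤ) ≤ l (z - 1).toNat := by exact_mod_cast hl (by omega)
  exact ⟨by omega, by omega, by omega⟩

lemma kappa_eq_toNat (m : ℕ) (k : ℤ) : kappa m k = ((m : ℤ) - max 1 (1 - k) + 1).toNat := by
  rw [kappa]
  split_ifs <;> omega

lemma ncard_inter_Iic_eq_min {S : Set ℤ} (hfin : S.Finite) {a : ℤ} (hSa : S ⊆ Ici a)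
    (hS : ∀ y ∈ S, Icc a y ⊆ S) (m : ℤ) :
    (S ∩ Iic m).ncard = min S.ncard (m - a + 1).toNat := by
  obtain rfl | hne := S.eq_empty_or_nonempty
  · simp
  -- `S` is the interval from `a` to its largest element `b`.
  obtain ⟨b, hbS, hb⟩ := hfin.exists_maximal hne
  have hSab : S = Icc a b :=
    Subset.antisymm (fun y hy => ⟨hSa hy, le_of_not_gt fun h => h.not_ge (hb hy h.le)⟩) (hS b hbS)
  have hab : a ≤ b := hSa hbS
  have hcut : S ∩ Iic m = Icc a (min b m) := by
    ext y
    simp only [hSab, mem_inter_iff, mem_Icc, mem_Iic, le_min_iff]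
    tauto
  rw [hcut, hSab, ← Finset.coe_Icc, ← Finset.coe_Icc, ncard_coe_finset, ncard_coe_finset,
    Int.card_Icc, Int.card_Icc]
  omega

lemma min_pyrOf_kappa {l : ℕ → ℕ} (hl : IsPartition l) (m : ℕ) (k : ℤ) :
    min (pyrOf l k) (kappa m k) = (diagonalRows l k ∩ Iic (m : ℤ)).ncard := by
  rw [pyrOf_eq_ncard_diagonalRows, kappa_eq_toNat,
    ncard_inter_Iic_eq_min (diagonalRows_finite hl.2 k) (diagonalRows_subset_Ici l k)
      (fun _ => Icc_subset_diagonalRows hl.1)]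

def youngRows (l : ℕ → ℕ) (m : ℕ) : Finset (ℤ × ℤ) :=
  (Finset.range m).biUnion fun i => Finset.Icc 1 (l i : ℤ) ×ˢ {(i : ℤ) + 1}

lemma coe_youngRows (l : ℕ → ℕ) (m : ℕ) :
    (youngRows l m : Set (ℤ × ℤ)) = young l ∩ {s | s.2 ≤ m} := by
  ext ⟨x, y⟩
  simp only [youngRows, young, Finset.coe_biUnion, Finset.coe_product, Finset.coe_Icc,
    Finset.coe_singleton, Finset.coe_range, mem_iUnion, mem_prod, mem_Icc, mem_singleton_iff,
    mem_Iio, mem_inter_iff, mem_ofPred_eq, exists_prop]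
  constructor
  · rintro ⟨i, hi, ⟨hx, hxl⟩, rfl⟩
    exact ⟨⟨hx, by omega, by simpa using hxl⟩, by omega⟩
  · rintro ⟨⟨hx, hy, hxl⟩, hym⟩
    exact ⟨(y - 1).toNat, by omega, ⟨hx, hxl⟩, by omega⟩

lemma card_youngRows (l : ℕ → ℕ) (m : ℕ) :
    (youngRows l m).card = ∑ i ∈ Finset.range m, l i := by
  rw [youngRows, Finset.card_biUnion]
  · simp
  · intro i _ j _ hij
    simp only [Function.onFun, Finset.disjoint_product, Finset.disjoint_singleton]
    exact Or.inr (by omega)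

lemma coe_youngRows_filter_content (l : ℕ → ℕ) (m : ℕ) (k : ℤ) :
    (({s ∈ youngRows l m | s.1 - s.2 = k} : Finset (ℤ × ℤ)) : Set (ℤ × ℤ)) =
      diagonalBox k '' (diagonalRows l k ∩ Iic (m : ℤ)) := by
  have hrows : diagonalBox k ⁻¹' {s | s.2 ≤ m} = Iic (m : ℤ) := rfl
  rw [← hrows, image_inter_preimage, ← young_diagonal_eq_image, Finset.coe_filter]
  ext s
  simp only [← Finset.mem_coe (s := youngRows l m), coe_youngRows, mem_ofPred_eq, mem_inter_iff]
  tauto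

lemma finsum_card_filter_eq_card {α β : Type*} [DecidableEq β] (s : Finset α) (f : α → β) :
    ∑ᶠ b, {a ∈ s | f a = b}.card = s.card := by
  rw [Finset.card_eq_sum_card_image f s, finsum_eq_sum_of_support_subset]
  intro b hb
  obtain ⟨a, ha⟩ := Finset.card_ne_zero.mp hb
  rw [Finset.mem_filter] at ha
  exact Finset.mem_coe.mpr (ha.2 ▸ Finset.mem_image_of_mem f ha.1)

lemma finsum_min_pyrOf_kappa {l : ℕ → ℕ} (hl : IsPartition l) (m : ℕ) :
    ∑ᶠ k : ℤ, min (pyrOf l k) (kappa m k) = ∑ i ∈ Finset.range m, l i :=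
  calc ∑ᶠ k : ℤ, min (pyrOf l k) (kappa m k)
      = ∑ᶠ k : ℤ, {s ∈ youngRows l m | s.1 - s.2 = k}.card := finsum_congr fun k => by
        rw [min_pyrOf_kappa hl, ← ncard_coe_finset, coe_youngRows_filter_content,
          ncard_image_of_injective _ (diagonalBox_injective k)]
    _ = (youngRows l m).card := finsum_card_filter_eq_card _ _
    _ = ∑ i ∈ Finset.range m, l i := card_youngRows l m

theorem dominance_iff_pyramid_general (l μ : ℕ → ℕ)
    (hl : IsPartition l) (hμ : IsPartition μ) :
    (∀ a : ℕ, 1 ≤ a → ∑ i ∈ Finset.range a, μ i ≤ ∑ i ∈ Finset.range a, l i) ↔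
      (∀ m : ℕ, ∑ᶠ k : ℤ, min (pyrOf μ k) (kappa m k) ≤ ∑ᶠ k : ℤ, min (pyrOf l k) (kappa m k)) := by
  simp only [finsum_min_pyrOf_kappa hl, finsum_min_pyrOf_kappa hμ]
  refine ⟨fun h m => ?_, fun h a _ => h a⟩
  rcases m with _ | m
  · simp
  · exact h _ m.succ_pos

/-- for partitions `λ, μ` of the same `n`, `λ` dominates `μ` iff
`∑_k min(p_λ k, κ_m k) ≥ ∑_k min(p_μ k, κ_m k)` for every `m ∈ ℕ`. -/
theorem dominance_iff_pyramid (n : ℕ) (l μ : ℕ → ℕ)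
    (hl : IsPartition l) (hμ : IsPartition μ)
    (hln : ∑ᶠ a : ℕ, l a = n) (hμn : ∑ᶠ a : ℕ, μ a = n) :
    (∀ a : ℕ, 1 ≤ a → ∑ i ∈ Finset.range a, μ i ≤ ∑ i ∈ Finset.range a, l i) ↔
      (∀ m : ℕ, ∑ᶠ k : ℤ, min (pyrOf μ k) (kappa m k) ≤ ∑ᶠ k : ℤ, min (pyrOf l k) (kappa m k)) :=
  dominance_iff_pyramid_general l μ hl hμ
end
end

section
/- Let p be a real pyramid and J = [a,b) a real interval. Set n_J(p) := 1 if J is addable for p, −1 if J is removable for p, and 0 otherwise. Then n_J(p) = δ_{0∈J} − (1_J, p), where δ_{0∈J} = 1 if a ≤ 0 < b and 0 otherwise, and where p is regarded as an integer-valued step function. -/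
noncomputable section
open Function
open scoped Classical

/-- The `ℕ`-valued indicator function of the interval `[a, b)`. -/
def ind (a b : ℝ) : ℝ → ℕ := (Set.Ico a b).indicator fun _ => 1

/-- A real pyramid: a function `p : ℝ → ℕ` vanishing outside a bounded set, maximal at `0`,
nondecreasing on `(-∞, 0]`, nonincreasing on `[0, ∞)`, right-continuous and piecewise
constant with finitely many discontinuities, and with jumps of size at most 1
(`p₋(x)` is the left limit of `p` at `x`). -/
def IsRealPyramid (p : ℝ → ℕ) : Prop :=
  (∃ M : ℝ, ∀ x : ℝ, M ≤ |x| → p x = 0) ∧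
  (∀ x, p x ≤ p 0) ∧
  (∀ ⦃x y : ℝ⦄, x ≤ y → y ≤ 0 → p x ≤ p y) ∧
  (∀ ⦃x y : ℝ⦄, 0 ≤ x → x ≤ y → p y ≤ p x) ∧
  (∀ x, ContinuousWithinAt p (Set.Ici x) x) ∧
  {x : ℝ | ¬ ContinuousAt p x}.Finite ∧
  (∀ x, |(p x : ℤ) - ((Function.leftLim p x : ℕ) : ℤ)| ≤ 1)

/-- The interval `[a, b)` is addable for `p` if `p + 1_{[a,b)}` is again a real pyramid. -/
def Addable (p : ℝ → ℕ) (a b : ℝ) : Prop := IsRealPyramid (fun x => p x + ind a b x)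

/-- The interval `[a, b)` is removable for `p` if `p ≥ 1` on `[a, b)` and `p − 1_{[a,b)}`
is again a real pyramid. -/
def Removable (p : ℝ → ℕ) (a b : ℝ) : Prop :=
  (∀ x ∈ Set.Ico a b, 1 ≤ p x) ∧ IsRealPyramid (fun x => p x - ind a b x)

/-- `n_J(p)`: `1` if `J = [a,b)` is addable for `p`, `−1` if removable, `0` otherwise. -/
def nJ (p : ℝ → ℕ) (a b : ℝ) : ℤ :=
  if Addable p a b then 1 else if Removable p a b then -1 else 0

/-- The `ℤ`-valued indicator function of the interval `[a, b)`. -/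
def indZ (a b : ℝ) : ℝ → ℤ := (Set.Ico a b).indicator fun _ => 1

/-- The Euler-form pairing `⟨f, g⟩ = Σ_x f₋(x) (g₋(x) − g(x))` for integer-valued step
functions, as a finitely supported sum over `x ∈ ℝ`. -/
def pairZ (f g : ℝ → ℤ) : ℤ :=
  ∑ᶠ x : ℝ, Function.leftLim f x * (Function.leftLim g x - g x)

/-- The symmetrized pairing `(f, g) = ⟨f, g⟩ + ⟨g, f⟩`. -/
def sympairZ (f g : ℝ → ℤ) : ℤ := pairZ f g + pairZ g f


/-!
Write `Δf(x) = f(x) - f₋(x)` for the jump of an integer-valued step function `f`. Telescoping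
over the finitely many jumps in `(a, b]` gives `⟨1_J, f⟩ = f(a) - f(b)`, while
`⟨f, 1_J⟩ = f₋(b) - f₋(a)`; hence `(1_J, p) = Δp(a) - Δp(b)`. By the same telescoping, a
compactly supported step function is a real pyramid exactly when each jump is `0` or `+1` at
points `x ≤ 0` and `0` or `-1` at points `x > 0`. Adding `1_J` changes the jumps only at `a`
(by `+1`) and at `b` (by `-1`), and removing it does the opposite, so addability and
removability are conditions on `Δp(a)` and `Δp(b)` alone, and the identity reduces to a finite
case check.
-/

open Filter Set Topology

section DiscreteCodomain

variable {X Y : Type*} [TopologicalSpace X] [TopologicalSpace Y] [DiscreteTopology Y]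

theorem continuousWithinAt_iff_eventually_eq {f : X → Y} {s : Set X} {x : X} :
    ContinuousWithinAt f s x ↔ ∀ᶠ y in 𝓝[s] x, f y = f x := by
  rw [ContinuousWithinAt, nhds_discrete Y, tendsto_pure]

theorem continuousAt_iff_eventually_eq {f : X → Y} {x : X} :
    ContinuousAt f x ↔ ∀ᶠ y in 𝓝 x, f y = f x := by
  rw [ContinuousAt, nhds_discrete Y, tendsto_pure]

end DiscreteCodomain

section LinearOrder

variable {α : Type*} [LinearOrder α] [TopologicalSpace α] [OrderTopology α]

theorem eventually_nhdsGE_le_iff (c x : α) : ∀ᶠ y in 𝓝[≥] x, (c ≤ y ↔ c ≤ x) := by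
  rcases le_or_gt c x with h | h
  · filter_upwards [self_mem_nhdsWithin] with y (hy : x ≤ y)
    exact iff_of_true (h.trans hy) h
  · filter_upwards [nhdsWithin_le_nhds (Iio_mem_nhds h)] with y (hy : y < c)
    exact iff_of_false hy.not_ge h.not_ge

theorem eventually_nhdsLT_le_iff (c x : α) : ∀ᶠ y in 𝓝[<] x, (c ≤ y ↔ c < x) := by
  rcases lt_or_ge c x with h | h
  · filter_upwards [nhdsWithin_le_nhds (Ioi_mem_nhds h)] with y (hy : c < y)
    exact iff_of_true hy.le h
  · filter_upwards [self_mem_nhdsWithin] with y (hy : y < x)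
    exact iff_of_false (hy.trans_le h).not_ge h.not_gt

theorem eventually_nhds_le_iff {c x : α} (hx : x ≠ c) : ∀ᶠ y in 𝓝 x, (c ≤ y ↔ c ≤ x) := by
  rcases hx.lt_or_gt with h | h
  · filter_upwards [Iio_mem_nhds h] with y (hy : y < c)
    exact iff_of_false hy.not_ge h.not_ge
  · filter_upwards [Ioi_mem_nhds h] with y (hy : c < y)
    exact iff_of_true hy.le h.le

end LinearOrder

theorem leftLim_eq_of_eventually_eq {β : Type*} [TopologicalSpace β] [T2Space β] {f : ℝ → β}
    {x : ℝ} {c : β} (h : ∀ᶠ y in 𝓝[<] x, f y = c) : leftLim f x = c :=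
  leftLim_eq_of_tendsto (tendsto_nhds_of_eventually_eq h)

/-- Between two consecutive discontinuities a function into a discrete space is constant, so its
left limits are attained. -/
theorem eventually_nhdsLT_eq_leftLim {β : Type*} [TopologicalSpace β] [DiscreteTopology β]
    {f : ℝ → β} (hf : {x | ¬ContinuousAt f x}.Finite) (x : ℝ) :
    ∀ᶠ y in 𝓝[<] x, f y = leftLim f x := by
  have hcont : ∀ᶠ y in 𝓝[<] x, ContinuousAt f y := by
    have hfar : (_ \ {x})ᶜ ∈ 𝓝 x := (hf.sdiff (t := {x})).isClosed.compl_mem_nhds (by simp)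
    filter_upwards [nhdsWithin_le_nhds hfar, self_mem_nhdsWithin] with y hy (hyx : y < x)
    by_contra h
    exact hy ⟨h, hyx.ne⟩
  obtain ⟨l, hl : l < x, hsub⟩ := mem_nhdsLT_iff_exists_Ioo_subset.1 hcont
  obtain ⟨m, hm⟩ := exists_between hl
  have hconst : ∀ᶠ y in 𝓝[<] x, f y = f m := by
    filter_upwards [Ioo_mem_nhdsLT hl] with y hy
    exact isPreconnected_Ioo.constant (fun z hz => (hsub hz).continuousWithinAt) hy hm
  rwa [leftLim_eq_of_eventually_eq hconst]

theorem eventually_nhdsGE_finsum_mem_Iic {M : Type*} [AddCommMonoid M] {j : ℝ → M}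
    (hj : (support j).Finite) (t : ℝ) :
    ∀ᶠ y in 𝓝[≥] t, ∑ᶠ x ∈ Iic y, j x = ∑ᶠ x ∈ Iic t, j x := by
  filter_upwards [(eventually_all_finite hj).2 fun s _ => eventually_nhdsGE_le_iff s t] with y hy
  exact finsum_mem_inter_support_eq' j _ _ hy

theorem eventually_nhdsLT_finsum_mem_Iic {M : Type*} [AddCommMonoid M] {j : ℝ → M}
    (hj : (support j).Finite) (t : ℝ) :
    ∀ᶠ y in 𝓝[<] t, ∑ᶠ x ∈ Iic y, j x = ∑ᶠ x ∈ Iio t, j x := by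
  filter_upwards [(eventually_all_finite hj).2 fun s _ => eventually_nhdsLT_le_iff s t] with y hy
  exact finsum_mem_inter_support_eq' j _ _ hy

def jump (f : ℝ → ℤ) (x : ℝ) : ℤ := f x - leftLim f x

structure IsStepFun (f : ℝ → ℤ) : Prop where
  continuousWithinAt_Ici : ∀ x, ContinuousWithinAt f (Ici x) x
  finite_discontinuities : {x | ¬ContinuousAt f x}.Finite

namespace IsStepFun

variable {f g : ℝ → ℤ}

theorem add (hf : IsStepFun f) (hg : IsStepFun g) : IsStepFun fun x => f x + g x where
  continuousWithinAt_Ici x := (hf.continuousWithinAt_Ici x).add (hg.continuousWithinAt_Ici x)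
  finite_discontinuities := (hf.finite_discontinuities.union hg.finite_discontinuities).subset
    fun x hx => by
      by_contra h
      simp only [mem_union, mem_ofPred_eq, not_or, not_not] at h
      exact hx (h.1.add h.2)

theorem sub (hf : IsStepFun f) (hg : IsStepFun g) : IsStepFun fun x => f x - g x where
  continuousWithinAt_Ici x := (hf.continuousWithinAt_Ici x).sub (hg.continuousWithinAt_Ici x)
  finite_discontinuities := (hf.finite_discontinuities.union hg.finite_discontinuities).subset
    fun x hx => by
      by_contra h
      simp only [mem_union, mem_ofPred_eq, not_or, not_not] at h
      exact hx (h.1.sub h.2)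

theorem jump_add (hf : IsStepFun f) (hg : IsStepFun g) (x : ℝ) :
    jump (fun y => f y + g y) x = jump f x + jump g x := by
  have hlim : leftLim (fun y => f y + g y) x = leftLim f x + leftLim g x :=
    leftLim_eq_of_eventually_eq <| by
      filter_upwards [eventually_nhdsLT_eq_leftLim hf.finite_discontinuities x,
        eventually_nhdsLT_eq_leftLim hg.finite_discontinuities x] with y hfy hgy
      rw [hfy, hgy]
  rw [jump, jump, jump, hlim]
  ring

theorem jump_sub (hf : IsStepFun f) (hg : IsStepFun g) (x : ℝ) :
    jump (fun y => f y - g y) x = jump f x - jump g x := by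
  have hlim : leftLim (fun y => f y - g y) x = leftLim f x - leftLim g x :=
    leftLim_eq_of_eventually_eq <| by
      filter_upwards [eventually_nhdsLT_eq_leftLim hf.finite_discontinuities x,
        eventually_nhdsLT_eq_leftLim hg.finite_discontinuities x] with y hfy hgy
      rw [hfy, hgy]
  rw [jump, jump, jump, hlim]
  ring

theorem finite_support_jump (hf : IsStepFun f) : (support (jump f)).Finite :=
  hf.finite_discontinuities.subset fun _ hx hcont =>
    hx (sub_eq_zero.2 hcont.continuousWithinAt.leftLim_eq.symm)

/-- `f t - ∑_{x ≤ t} Δf(x)` is continuous, hence constant. -/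
theorem sub_eq_finsum_jump (hf : IsStepFun f) {u v : ℝ} (huv : u ≤ v) :
    f v - f u = ∑ᶠ x ∈ Ioc u v, jump f x := by
  have hS := hf.finite_support_jump
  have hcont : Continuous fun t => f t - ∑ᶠ x ∈ Iic t, jump f x := by
    refine continuous_iff_continuousAt.2 fun t => ?_
    rw [continuousAt_iff_eventually_eq, ← nhdsLT_sup_nhdsGE, eventually_sup]
    constructor
    · filter_upwards [eventually_nhdsLT_eq_leftLim hf.finite_discontinuities t,
        eventually_nhdsLT_finsum_mem_Iic hS t] with y hfy hsum
      rw [hfy, hsum, ← Iio_insert, finsum_mem_insert' _ self_notMem_Iio (hS.inter_of_right _),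
        jump]
      ring
    · filter_upwards [continuousWithinAt_iff_eventually_eq.1 (hf.continuousWithinAt_Ici t),
        eventually_nhdsGE_finsum_mem_Iic hS t] with y hfy hsum
      rw [hfy, hsum]
  have hconst := PreconnectedSpace.constant inferInstance hcont (x := v) (y := u)
  rw [← Iic_union_Ioc_eq_Iic huv, finsum_mem_union' (Iic_disjoint_Ioc le_rfl)
    (hS.inter_of_right _) (hS.inter_of_right _)] at hconst
  linarith

theorem le_of_jump_nonneg (hf : IsStepFun f) {u v : ℝ} (huv : u ≤ v)
    (h : ∀ x ∈ Ioc u v, 0 ≤ jump f x) : f u ≤ f v := by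
  have hsum : 0 ≤ ∑ᶠ x ∈ Ioc u v, jump f x :=
    finsum_mem_induction (0 ≤ ·) le_rfl (fun _ _ => add_nonneg) h
  linarith [hf.sub_eq_finsum_jump huv]

theorem le_of_jump_nonpos (hf : IsStepFun f) {u v : ℝ} (huv : u ≤ v)
    (h : ∀ x ∈ Ioc u v, jump f x ≤ 0) : f v ≤ f u := by
  have hsum : ∑ᶠ x ∈ Ioc u v, jump f x ≤ 0 :=
    finsum_mem_induction (· ≤ 0) le_rfl (fun _ _ => add_nonpos) h
  linarith [hf.sub_eq_finsum_jump huv]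

end IsStepFun

section Indicator

variable {a b x : ℝ}

theorem indZ_apply (a b y : ℝ) : indZ a b y = if a ≤ y ∧ ¬b ≤ y then 1 else 0 := by
  simp [indZ, indicator_apply, not_le]

theorem natCast_ind (a b y : ℝ) : ((ind a b y : ℕ) : ℤ) = indZ a b y := by
  simp only [ind, indZ, indicator_apply]
  split_ifs <;> rfl

theorem eventually_indZ_eq {l : Filter ℝ} {P Q : Prop} (ha : ∀ᶠ y in l, (a ≤ y ↔ P))
    (hb : ∀ᶠ y in l, (b ≤ y ↔ Q)) : ∀ᶠ y in l, indZ a b y = if P ∧ ¬Q then 1 else 0 := by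
  filter_upwards [ha, hb] with y hya hyb
  simp only [indZ_apply, hya, hyb]

theorem continuousAt_indZ (hxa : x ≠ a) (hxb : x ≠ b) : ContinuousAt (indZ a b) x := by
  rw [continuousAt_iff_eventually_eq, indZ_apply]
  exact eventually_indZ_eq (eventually_nhds_le_iff hxa) (eventually_nhds_le_iff hxb)

theorem isStepFun_indZ (a b : ℝ) : IsStepFun (indZ a b) where
  continuousWithinAt_Ici x := by
    rw [continuousWithinAt_iff_eventually_eq, indZ_apply]
    exact eventually_indZ_eq (eventually_nhdsGE_le_iff a x) (eventually_nhdsGE_le_iff b x)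
  finite_discontinuities := (toFinite {a, b}).subset fun x hx => by
    by_contra h
    simp only [mem_insert_iff, mem_singleton_iff, not_or] at h
    exact hx (continuousAt_indZ h.1 h.2)

theorem leftLim_indZ (a b x : ℝ) : leftLim (indZ a b) x = if x ∈ Ioc a b then 1 else 0 := by
  refine leftLim_eq_of_eventually_eq ?_
  simpa only [mem_Ioc, not_lt] using
    eventually_indZ_eq (eventually_nhdsLT_le_iff a x) (eventually_nhdsLT_le_iff b x)

theorem jump_indZ_of_ne (hxa : x ≠ a) (hxb : x ≠ b) : jump (indZ a b) x = 0 :=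
  sub_eq_zero.2 (continuousAt_indZ hxa hxb).continuousWithinAt.leftLim_eq.symm

theorem jump_indZ_left (hab : a < b) : jump (indZ a b) a = 1 := by
  simp [jump, indZ_apply, leftLim_indZ, hab]

theorem jump_indZ_right (hab : a < b) : jump (indZ a b) b = -1 := by
  simp [jump, indZ_apply, leftLim_indZ, hab, hab.le]

end Indicator

theorem pairZ_eq_neg_finsum (f g : ℝ → ℤ) : pairZ f g = -∑ᶠ x, leftLim f x * jump g x := by
  rw [pairZ, ← finsum_neg_distrib]
  congr 1 with x
  rw [jump]
  ring

theorem pairZ_indZ_left {f : ℝ → ℤ} (hf : IsStepFun f) {a b : ℝ} (hab : a ≤ b) :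
    pairZ (indZ a b) f = f a - f b := by
  rw [pairZ_eq_neg_finsum, ← neg_sub, hf.sub_eq_finsum_jump hab, finsum_mem_def]
  congr 2 with x
  rw [leftLim_indZ, indicator_apply]
  split_ifs <;> ring

theorem pairZ_indZ_right (f : ℝ → ℤ) {a b : ℝ} (hab : a < b) :
    pairZ f (indZ a b) = leftLim f b - leftLim f a := by
  have hsupp : support (fun x => leftLim f x * jump (indZ a b) x) ⊆ ({a, b} : Finset ℝ) := by
    intro x hx
    by_contra h
    simp only [Finset.coe_insert, Finset.coe_singleton, mem_insert_iff, mem_singleton_iff,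
      not_or] at h
    exact hx (mul_eq_zero_of_right _ (jump_indZ_of_ne h.1 h.2))
  rw [pairZ_eq_neg_finsum, finsum_eq_sum_of_support_subset _ hsupp, Finset.sum_pair hab.ne,
    jump_indZ_left hab, jump_indZ_right hab]
  ring

theorem sympairZ_indZ {f : ℝ → ℤ} (hf : IsStepFun f) {a b : ℝ} (hab : a < b) :
    sympairZ (indZ a b) f = jump f a - jump f b := by
  rw [sympairZ, pairZ_indZ_left hf hab.le, pairZ_indZ_right f hab, jump, jump]
  ring

theorem jump_nonneg_of_eventually_le {f : ℝ → ℤ} (hf : {x | ¬ContinuousAt f x}.Finite) {x : ℝ}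
    (h : ∀ᶠ y in 𝓝[<] x, f y ≤ f x) : 0 ≤ jump f x := by
  obtain ⟨y, hy, hyx⟩ := (h.and (eventually_nhdsLT_eq_leftLim hf x)).exists
  rw [jump, ← hyx]
  omega

theorem jump_nonpos_of_eventually_le {f : ℝ → ℤ} (hf : {x | ¬ContinuousAt f x}.Finite) {x : ℝ}
    (h : ∀ᶠ y in 𝓝[<] x, f x ≤ f y) : jump f x ≤ 0 := by
  obtain ⟨y, hy, hyx⟩ := (h.and (eventually_nhdsLT_eq_leftLim hf x)).exists
  rw [jump, ← hyx]
  omega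

def IsPyramidJump (x : ℝ) (j : ℤ) : Prop := if x ≤ 0 then j = 0 ∨ j = 1 else j = 0 ∨ j = -1

def HasPyramidJumps (f : ℝ → ℤ) : Prop := ∀ x, IsPyramidJump x (jump f x)

theorem isPyramidJump_iff {x : ℝ} {j : ℤ} :
    IsPyramidJump x j ↔ |j| ≤ 1 ∧ (x ≤ 0 → 0 ≤ j) ∧ (0 < x → j ≤ 0) := by
  rw [IsPyramidJump, abs_le]
  split_ifs with hx
  · simp only [hx, not_lt.2 hx, true_implies, false_implies, and_true]
    omega
  · simp only [hx, not_le.1 hx, true_implies, false_implies, true_and]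
    omega

theorem hasPyramidJumps_iff_of_jump_eq {f g : ℝ → ℤ} (hf : HasPyramidJumps f) {a b : ℝ}
    (hfg : ∀ x, x ≠ a → x ≠ b → jump g x = jump f x) :
    HasPyramidJumps g ↔ IsPyramidJump a (jump g a) ∧ IsPyramidJump b (jump g b) := by
  refine ⟨fun hg => ⟨hg a, hg b⟩, fun ⟨ha, hb⟩ x => ?_⟩
  by_cases hxa : x = a
  · rwa [hxa]
  by_cases hxb : x = b
  · rwa [hxb]
  rw [hfg x hxa hxb]
  exact hf x

namespace IsStepFun

variable {f : ℝ → ℤ}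

theorem monotoneOn_of_hasPyramidJumps (hf : IsStepFun f) (hj : HasPyramidJumps f) :
    MonotoneOn f (Iic 0) := fun _ _ _ hy hxy =>
  hf.le_of_jump_nonneg hxy fun t ht => (isPyramidJump_iff.1 (hj t)).2.1 (ht.2.trans hy)

theorem antitoneOn_of_hasPyramidJumps (hf : IsStepFun f) (hj : HasPyramidJumps f) :
    AntitoneOn f (Ici 0) := fun _ hx _ _ hxy =>
  hf.le_of_jump_nonpos hxy fun t ht => (isPyramidJump_iff.1 (hj t)).2.2 (lt_of_le_of_lt hx ht.1)

end IsStepFun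

theorem isStepFun_natCast_iff {q : ℝ → ℕ} :
    IsStepFun (fun x => (q x : ℤ)) ↔
      (∀ x, ContinuousWithinAt q (Ici x) x) ∧ {x | ¬ContinuousAt q x}.Finite := by
  have hwithin (x : ℝ) :
      ContinuousWithinAt (fun y => (q y : ℤ)) (Ici x) x ↔ ContinuousWithinAt q (Ici x) x := by
    simp only [continuousWithinAt_iff_eventually_eq, Nat.cast_inj]
  have hat (x : ℝ) : ContinuousAt (fun y => (q y : ℤ)) x ↔ ContinuousAt q x := by
    simp only [continuousAt_iff_eventually_eq, Nat.cast_inj]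
  exact ⟨fun ⟨hr, hd⟩ => ⟨fun x => (hwithin x).1 (hr x), by simpa only [hat] using hd⟩,
    fun ⟨hr, hd⟩ => ⟨fun x => (hwithin x).2 (hr x), by simpa only [hat] using hd⟩⟩

theorem leftLim_natCast {q : ℝ → ℕ} (hq : {x | ¬ContinuousAt q x}.Finite) (x : ℝ) :
    leftLim (fun y => (q y : ℤ)) x = leftLim q x :=
  leftLim_eq_of_eventually_eq ((eventually_nhdsLT_eq_leftLim hq x).mono fun _ hy => by rw [hy])

theorem isRealPyramid_iff {q : ℝ → ℕ} :
    IsRealPyramid q ↔ (∃ M : ℝ, ∀ x : ℝ, M ≤ |x| → q x = 0) ∧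
      IsStepFun (fun x => (q x : ℤ)) ∧ HasPyramidJumps (fun x => (q x : ℤ)) := by
  constructor
  · rintro ⟨hsupp, -, hmono, hanti, hright, hfin, hjump⟩
    have hstep : IsStepFun (fun x => (q x : ℤ)) := isStepFun_natCast_iff.2 ⟨hright, hfin⟩
    refine ⟨hsupp, hstep, fun x => isPyramidJump_iff.2 ⟨?_, fun hx => ?_, fun hx => ?_⟩⟩
    · rw [jump, leftLim_natCast hfin]
      exact hjump x
    · refine jump_nonneg_of_eventually_le hstep.finite_discontinuities ?_
      filter_upwards [self_mem_nhdsWithin] with y (hy : y < x)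
      exact_mod_cast hmono hy.le hx
    · refine jump_nonpos_of_eventually_le hstep.finite_discontinuities ?_
      filter_upwards [Ioo_mem_nhdsLT hx] with y hy
      exact_mod_cast hanti hy.1.le hy.2.le
  · rintro ⟨hsupp, hstep, hjumps⟩
    obtain ⟨hright, hfin⟩ := isStepFun_natCast_iff.1 hstep
    have hmono : ∀ ⦃x y : ℝ⦄, x ≤ y → y ≤ 0 → q x ≤ q y := fun x y hxy hy => by
      exact_mod_cast hstep.monotoneOn_of_hasPyramidJumps hjumps (hxy.trans hy) hy hxy
    have hanti : ∀ ⦃x y : ℝ⦄, 0 ≤ x → x ≤ y → q y ≤ q x := fun x y hx hxy => by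
      exact_mod_cast hstep.antitoneOn_of_hasPyramidJumps hjumps hx (hx.trans hxy) hxy
    refine ⟨hsupp, fun x => ?_, hmono, hanti, hright, hfin, fun x => ?_⟩
    · rcases le_total x 0 with hx | hx
      exacts [hmono hx le_rfl, hanti le_rfl hx]
    · rw [← leftLim_natCast hfin]
      exact (isPyramidJump_iff.1 (hjumps x)).1

section Perturbation

variable {a b : ℝ}

theorem ind_eq_zero_of_lt_abs {x : ℝ} (hx : |a| + |b| < |x|) : ind a b x = 0 := by
  refine indicator_of_notMem (fun hmem => hx.not_ge (abs_le.2 ⟨?_, ?_⟩)) _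
  · linarith [neg_abs_le a, abs_nonneg b, hmem.1]
  · linarith [le_abs_self b, abs_nonneg a, hmem.2]

theorem natCast_sub_ind {p : ℝ → ℕ} (hp : ∀ x ∈ Ico a b, 1 ≤ p x) (x : ℝ) :
    ((p x - ind a b x : ℕ) : ℤ) = p x - indZ a b x := by
  by_cases hx : x ∈ Ico a b
  · simp [ind, indZ, hx, Nat.cast_sub (hp x hx)]
  · simp [ind, indZ, hx]

theorem one_le_of_hasPyramidJumps_sub_indZ {f : ℝ → ℤ} (hf : ∀ x, 0 ≤ f x)
    (hstep : IsStepFun fun x => f x - indZ a b x) (hj : HasPyramidJumps fun x => f x - indZ a b x)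
    {x : ℝ} (hx : x ∈ Ico a b) : 1 ≤ f x := by
  have hindx : indZ a b x = 1 := indicator_of_mem hx _
  rcases le_or_gt x 0 with hx0 | hx0
  · have hmono := hstep.monotoneOn_of_hasPyramidJumps hj
      (show a - 1 ≤ 0 by linarith [hx.1]) hx0 (by linarith [hx.1])
    have hind : indZ a b (a - 1) = 0 := indicator_of_notMem (by simp) _
    linarith [hf (a - 1)]
  · have hanti := hstep.antitoneOn_of_hasPyramidJumps hj hx0.le (hx0.le.trans hx.2.le) hx.2.le
    have hind : indZ a b b = 0 := indicator_of_notMem (by simp) _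
    linarith [hf b]

theorem hasPyramidJumps_add_indZ_iff {f : ℝ → ℤ} (hf : IsStepFun f) (hj : HasPyramidJumps f)
    (hab : a < b) :
    HasPyramidJumps (fun x => f x + indZ a b x) ↔
      IsPyramidJump a (jump f a + 1) ∧ IsPyramidJump b (jump f b - 1) := by
  have hjump := hf.jump_add (isStepFun_indZ a b)
  rw [hasPyramidJumps_iff_of_jump_eq hj fun x hxa hxb => by
      rw [hjump, jump_indZ_of_ne hxa hxb, add_zero],
    hjump, hjump, jump_indZ_left hab, jump_indZ_right hab, ← sub_eq_add_neg]

theorem hasPyramidJumps_sub_indZ_iff {f : ℝ → ℤ} (hf : IsStepFun f) (hj : HasPyramidJumps f)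
    (hab : a < b) :
    HasPyramidJumps (fun x => f x - indZ a b x) ↔
      IsPyramidJump a (jump f a - 1) ∧ IsPyramidJump b (jump f b + 1) := by
  have hjump := hf.jump_sub (isStepFun_indZ a b)
  rw [hasPyramidJumps_iff_of_jump_eq hj fun x hxa hxb => by
      rw [hjump, jump_indZ_of_ne hxa hxb, sub_zero],
    hjump, hjump, jump_indZ_left hab, jump_indZ_right hab, sub_neg_eq_add]

theorem addable_iff_hasPyramidJumps {p : ℝ → ℕ} (hp : IsRealPyramid p) :
    Addable p a b ↔ HasPyramidJumps (fun x => (p x : ℤ) + indZ a b x) := by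
  obtain ⟨⟨M, hM⟩, hstep, -⟩ := isRealPyramid_iff.1 hp
  have hsupp : ∃ M : ℝ, ∀ x : ℝ, M ≤ |x| → p x + ind a b x = 0 := by
    refine ⟨max M (|a| + |b| + 1), fun x hx => ?_⟩
    have hx' : |a| + |b| < |x| := by linarith [le_max_right M (|a| + |b| + 1)]
    rw [hM x (le_of_max_le_left hx), ind_eq_zero_of_lt_abs hx']
  simp only [Addable, isRealPyramid_iff, Nat.cast_add, natCast_ind]
  exact ⟨fun h => h.2.2, fun h => ⟨hsupp, hstep.add (isStepFun_indZ a b), h⟩⟩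

theorem removable_iff_hasPyramidJumps {p : ℝ → ℕ} (hp : IsRealPyramid p) :
    Removable p a b ↔ HasPyramidJumps (fun x => (p x : ℤ) - indZ a b x) := by
  obtain ⟨⟨M, hM⟩, hstep, -⟩ := isRealPyramid_iff.1 hp
  refine ⟨fun ⟨hpos, hq⟩ => ?_, fun hj => ?_⟩
  · simpa only [natCast_sub_ind hpos] using (isRealPyramid_iff.1 hq).2.2
  have hpos : ∀ x ∈ Ico a b, 1 ≤ p x := fun x hx => by
    exact_mod_cast one_le_of_hasPyramidJumps_sub_indZ (fun x => Nat.cast_nonneg (p x))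
      (hstep.sub (isStepFun_indZ a b)) hj hx
  refine ⟨hpos, isRealPyramid_iff.2 ⟨⟨M, fun x hx => by rw [hM x hx, Nat.zero_sub]⟩, ?_, ?_⟩⟩
  · simpa only [natCast_sub_ind hpos] using hstep.sub (isStepFun_indZ a b)
  · simpa only [natCast_sub_ind hpos] using hj

end Perturbation

/-- `n_J(p) = δ_{0 ∈ J} − (1_J, p)` for any real pyramid `p` and real
interval `J = [a, b)`. -/
theorem nJ_eq_delta_sub_pairing (p : ℝ → ℕ) (hp : IsRealPyramid p) (a b : ℝ) (hab : a < b) :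
    nJ p a b =
      (if a ≤ 0 ∧ 0 < b then 1 else 0) - sympairZ (indZ a b) (fun x => (p x : ℤ)) := by
  obtain ⟨-, hstep, hjumps⟩ := isRealPyramid_iff.1 hp
  simp only [nJ, addable_iff_hasPyramidJumps hp, removable_iff_hasPyramidJumps hp,
    hasPyramidJumps_add_indZ_iff hstep hjumps hab, hasPyramidJumps_sub_indZ_iff hstep hjumps hab,
    sympairZ_indZ hstep hab]
  have ha := hjumps a
  have hb := hjumps b
  unfold IsPyramidJump at *
  simp only [ite_and]
  split_ifs at * <;> first | omega | (exfalso; linarith)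
end
end

section
/- Let p be a real pyramid and let I = [a,b) and J = [a',b') be real intervals with I ⊆ J. If either (p + 1_I and p + 1_I + 1_J are both real pyramids) or (p + 1_J and p + 1_J + 1_I are both real pyramids), then a' < a and b < b' (i.e. the closure of I is contained in the interior of J). -/
noncomputable section
open Function
open scoped Classical

open Filter Topology Set

/-!
Let `q = p + 1_I + 1_J`. A real pyramid only jumps up (by at most 1) at points `t ≤ 0` and only
jumps down (by at most 1) at points `t > 0`, so the jumps of two pyramids at the same point differ
by at most 1. If `I` and `J` shared their left end point `a`, the jump of `q` at `a` would exceed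
that of `p` by 2; if they shared their right end point, it would fall short of it by 2.
-/

theorem eventually_eq_leftLim_of_finite_discontinuities {α : Type*} [TopologicalSpace α]
    [DiscreteTopology α] {f : ℝ → α} (hf : {x | ¬ContinuousAt f x}.Finite) (t : ℝ) :
    ∀ᶠ x in 𝓝[<] t, f x = leftLim f t := by
  have hcont : ∀ᶠ x in 𝓝[<] t, ContinuousAt f x := by
    filter_upwards [nhdsLT_le_nhdsNE t (nhdsNE_le_cofinite t hf.compl_mem_cofinite)]
      with x hx using not_not.1 hx
  obtain ⟨m, hm, hIoo⟩ := mem_nhdsLT_iff_exists_Ioo_subset.1 hcont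
  have hmid : (m + t) / 2 ∈ Ioo m t := ⟨by linarith [mem_Iio.1 hm], by linarith [mem_Iio.1 hm]⟩
  have hconst : ∀ᶠ x in 𝓝[<] t, f x = f ((m + t) / 2) := by
    filter_upwards [Ioo_mem_nhdsLT hm] with x hx
    exact (isPreconnected_Ioo.image f fun y hy => (hIoo hy).continuousWithinAt).subsingleton
      ⟨x, hx, rfl⟩ ⟨_, hmid, rfl⟩
  rwa [leftLim_eq_of_tendsto (tendsto_const_nhds.congr' (hconst.mono fun _ hx => hx.symm))]

namespace IsRealPyramid

variable {p q : ℝ → ℕ} {t : ℝ}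

theorem eventually_eq_leftLim (hp : IsRealPyramid p) (t : ℝ) :
    ∀ᶠ x in 𝓝[<] t, p x = leftLim p t :=
  eventually_eq_leftLim_of_finite_discontinuities hp.2.2.2.2.2.1 t

theorem leftLim_le_of_nonpos (hp : IsRealPyramid p) (ht : t ≤ 0) : leftLim p t ≤ p t := by
  obtain ⟨x, hx, hxt⟩ := ((hp.eventually_eq_leftLim t).and self_mem_nhdsWithin).exists
  exact hx ▸ hp.2.2.1 (le_of_lt hxt) ht

theorem le_leftLim_of_pos (hp : IsRealPyramid p) (ht : 0 < t) : p t ≤ leftLim p t := by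
  obtain ⟨x, hx, hxt⟩ := ((hp.eventually_eq_leftLim t).and (Ioo_mem_nhdsLT ht)).exists
  exact hx ▸ hp.2.2.2.1 hxt.1.le hxt.2.le

theorem abs_jump_sub_jump_le_one (hp : IsRealPyramid p) (hq : IsRealPyramid q) (t : ℝ) :
    |((q t : ℤ) - leftLim q t) - ((p t : ℤ) - leftLim p t)| ≤ 1 := by
  have hpj := abs_le.1 (hp.2.2.2.2.2.2 t)
  have hqj := abs_le.1 (hq.2.2.2.2.2.2 t)
  rw [abs_le]
  rcases le_or_gt t 0 with ht | ht
  · have := hp.leftLim_le_of_nonpos ht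
    have := hq.leftLim_le_of_nonpos ht
    omega
  · have := hp.le_leftLim_of_pos ht
    have := hq.le_leftLim_of_pos ht
    omega

theorem abs_sub_le_one_of_eventually_left (hp : IsRealPyramid p) (hq : IsRealPyramid q)
    {c d : ℕ} (hleft : ∀ᶠ x in 𝓝[<] t, q x = p x + c) (hat : q t = p t + d) :
    |(d : ℤ) - c| ≤ 1 := by
  obtain ⟨x, hpx, hqx, hx⟩ :=
    ((hp.eventually_eq_leftLim t).and ((hq.eventually_eq_leftLim t).and hleft)).exists
  have := hp.abs_jump_sub_jump_le_one hq t
  rw [hat, ← hpx, ← hqx, hx] at this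
  push_cast at this
  convert this using 2
  ring

end IsRealPyramid

theorem ind_of_mem {a b x : ℝ} (h : x ∈ Ico a b) : ind a b x = 1 :=
  indicator_of_mem h _

theorem ind_of_notMem {a b x : ℝ} (h : x ∉ Ico a b) : ind a b x = 0 :=
  indicator_of_notMem h _

theorem nested_addable_strict_general (p : ℝ → ℕ) (hp : IsRealPyramid p) (a b a' b' : ℝ)
    (hab : a < b) (hsub : Set.Ico a b ⊆ Set.Ico a' b')
    (h : (IsRealPyramid (fun x => p x + ind a b x) ∧
          IsRealPyramid (fun x => p x + ind a b x + ind a' b' x)) ∨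
         (IsRealPyramid (fun x => p x + ind a' b' x) ∧
          IsRealPyramid (fun x => p x + ind a' b' x + ind a b x))) :
    a' < a ∧ b < b' := by
  have hq : IsRealPyramid (fun x => p x + ind a b x + ind a' b' x) := by
    rcases h with ⟨-, hq⟩ | ⟨-, hq⟩
    · exact hq
    · simpa only [add_right_comm] using hq
  obtain ⟨ha, hb⟩ := (Ico_subset_Ico_iff hab).1 hsub
  refine ⟨ha.lt_of_ne ?_, hb.lt_of_ne ?_⟩
  · rintro rfl
    have hleft : ∀ᶠ x in 𝓝[<] a', p x + ind a' b x + ind a' b' x = p x + 0 := by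
      filter_upwards [self_mem_nhdsWithin] with x (hx : x < a')
      rw [ind_of_notMem fun h => hx.not_ge h.1, ind_of_notMem fun h => hx.not_ge h.1]
    have := hp.abs_sub_le_one_of_eventually_left hq hleft (d := 2)
      (by rw [ind_of_mem ⟨le_rfl, hab⟩, ind_of_mem ⟨le_rfl, hsub ⟨le_rfl, hab⟩ |>.2⟩])
    norm_num at this
  · rintro rfl
    have hleft : ∀ᶠ x in 𝓝[<] b, p x + ind a b x + ind a' b x = p x + 2 := by
      filter_upwards [Ioo_mem_nhdsLT hab] with x hx
      rw [ind_of_mem (Ioo_subset_Ico_self hx), ind_of_mem (hsub (Ioo_subset_Ico_self hx))]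
    have := hp.abs_sub_le_one_of_eventually_left hq hleft (d := 0)
      (by rw [ind_of_notMem fun h => h.2.false, ind_of_notMem fun h => h.2.false])
    norm_num at this

/-- if `I = [a,b) ⊆ J = [a',b')` and both `I` and `J` can be added to `p`
(in either order), then the closure of `I` lies in the interior of `J`. -/
theorem nested_addable_strict (p : ℝ → ℕ) (hp : IsRealPyramid p) (a b a' b' : ℝ)
    (hab : a < b) (hab' : a' < b') (hsub : Set.Ico a b ⊆ Set.Ico a' b')
    (h : (IsRealPyramid (fun x => p x + ind a b x) ∧
          IsRealPyramid (fun x => p x + ind a b x + ind a' b' x)) ∨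
         (IsRealPyramid (fun x => p x + ind a' b' x) ∧
          IsRealPyramid (fun x => p x + ind a' b' x + ind a b x))) :
    a' < a ∧ b < b' :=
  nested_addable_strict_general p hp a b a' b' hab hsub h
end
end

section
/- Let p be a real pyramid with p not identically zero, and set s := p(0) ≥ 1. Then there exist real numbers a_1 < a_2 < ⋯ < a_s ≤ 0 < b_s < b_{s−1} < ⋯ < b_1 such that p = Σ_{i=1}^{s} 1_{[a_i, b_i)}; in other words, p is the sum of the indicator functions of s strictly nested intervals with pairwise distinct endpoints. -/
noncomputable section
open Function
open scoped Classical

/-!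
Each superlevel set `{x | k ≤ p x}` with `1 ≤ k ≤ p 0` is a bounded interval containing `0`
(unimodality), and right-continuity of the integer-valued `p` makes it of the form
`[a_k, b_k)`. These sets decrease in `k`, so `p = ∑_{k=1}^{p 0} 1_{[a_k, b_k)}`. Two of them
cannot share an endpoint, since `p` would jump by at least `2` there.
-/

open Set Filter Topology

theorem exists_Ico_forall_eq_of_continuousWithinAt_Ici {α : Type*} [TopologicalSpace α]
    [DiscreteTopology α] {f : ℝ → α} {x : ℝ} (hf : ContinuousWithinAt f (Ici x) x) :
    ∃ u, x < u ∧ ∀ y ∈ Ico x u, f y = f x :=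
  mem_nhdsGE_iff_exists_Ico_subset.1 (hf ((isOpen_discrete {f x}).mem_nhds rfl))

theorem Set.OrdConnected.eq_Ico_of_isLeast {α : Type*} [ConditionallyCompleteLinearOrder α]
    {S : Set α} {a : α} (hS : S.OrdConnected)
    (ha : IsLeast S a) (hbdd : BddAbove S) (hnomax : ∀ x ∈ S, ∃ y ∈ S, x < y) :
    S = Ico a (sSup S) := by
  ext x
  refine ⟨fun hx => ⟨ha.2 hx, ?_⟩, fun ⟨hax, hxb⟩ => ?_⟩
  · obtain ⟨y, hy, hxy⟩ := hnomax x hx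
    exact hxy.trans_le (le_csSup hbdd hy)
  · obtain ⟨z, hz, hxz⟩ := exists_lt_of_lt_csSup ⟨a, ha.1⟩ hxb
    exact hS.out ha.1 hz ⟨hax, hxz.le⟩

/-- A preimage under a right-continuous map to a discrete space contains a right neighbourhood
of each of its points, hence its infimum and not its supremum. -/
theorem preimage_eq_Ico_of_continuousWithinAt_Ici {α : Type*} [TopologicalSpace α]
    [DiscreteTopology α] {f : ℝ → α} (hf : ∀ x, ContinuousWithinAt f (Ici x) x) {T : Set α}
    (hT : (f ⁻¹' T).OrdConnected) (hne : (f ⁻¹' T).Nonempty)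
    (hbdd : Bornology.IsBounded (f ⁻¹' T)) :
    f ⁻¹' T = Ico (sInf (f ⁻¹' T)) (sSup (f ⁻¹' T)) := by
  refine hT.eq_Ico_of_isLeast ⟨?_, fun x hx => csInf_le hbdd.bddBelow hx⟩ hbdd.bddAbove ?_
  · obtain ⟨u, hu, hconst⟩ := exists_Ico_forall_eq_of_continuousWithinAt_Ici (hf (sInf (f ⁻¹' T)))
    obtain ⟨y, hy, hyu⟩ := exists_lt_of_csInf_lt hne hu
    have hfy : f y = f (sInf (f ⁻¹' T)) := hconst y ⟨csInf_le hbdd.bddBelow hy, hyu⟩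
    exact show f _ ∈ T from hfy ▸ hy
  · intro x hx
    obtain ⟨u, hu, hconst⟩ := exists_Ico_forall_eq_of_continuousWithinAt_Ici (hf x)
    obtain ⟨y, hxy, hyu⟩ := exists_between hu
    exact ⟨y, show f y ∈ T from (hconst y ⟨hxy.le, hyu⟩).symm ▸ hx, hxy⟩

section LeftLim

variable {α β : Type*} [LinearOrder α] [TopologicalSpace α] [OrderTopology α]
  [DenselyOrdered α] [ConditionallyCompleteLinearOrder β] [TopologicalSpace β] [OrderTopology β]
  {f : α → β} {m : β}

theorem MonotoneOn.leftLim_le_of_forall_lt [NoMinOrder α] {c : α} (hf : MonotoneOn f (Iio c))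
    (hm : ∀ x < c, f x ≤ m) : leftLim f c ≤ m := by
  have hbdd : BddAbove (f '' Iio c) := ⟨m, by rintro _ ⟨x, hx, rfl⟩; exact hm x hx⟩
  rw [leftLim_eq_of_tendsto (hf.tendsto_nhdsLT hbdd)]
  exact csSup_le (nonempty_Iio.image f) (by rintro _ ⟨x, hx, rfl⟩; exact hm x hx)

theorem AntitoneOn.le_leftLim_of_forall_mem_Ioo {a d : α} (had : a < d)
    (hf : AntitoneOn f (Ioo a d)) (hm : ∀ x ∈ Ioo a d, m ≤ f x) : m ≤ leftLim f d := by
  have hbdd : BddBelow (f '' Ioo a d) := ⟨m, by rintro _ ⟨x, hx, rfl⟩; exact hm x hx⟩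
  have : (𝓝[<] d).NeBot := nhdsLT_neBot_of_exists_lt ⟨a, had⟩
  rw [leftLim_eq_of_tendsto (hf.tendsto_nhdsWithin_Ioo_left (nonempty_Ioo.2 had) hbdd)]
  exact le_csInf ((nonempty_Ioo.2 had).image f) (by rintro _ ⟨x, hx, rfl⟩; exact hm x hx)

end LeftLim

theorem Fin.sum_ite_val_lt {s n : ℕ} (hn : n ≤ s) :
    ∑ i : Fin s, (if (i : ℕ) < n then 1 else 0) = n := by
  rw [Finset.sum_boole, Fin.card_filter_val_lt, Nat.cast_id, min_eq_right hn]

namespace IsRealPyramid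

variable {p : ℝ → ℕ}

theorem le_map_zero (hp : IsRealPyramid p) (x : ℝ) : p x ≤ p 0 := hp.2.1 x

theorem monotoneOn_Iic (hp : IsRealPyramid p) : MonotoneOn p (Iic 0) :=
  fun _ _ _ hy hxy => hp.2.2.1 hxy hy

theorem antitoneOn_Ici (hp : IsRealPyramid p) : AntitoneOn p (Ici 0) :=
  fun _ hx _ _ hxy => hp.2.2.2.1 hx hxy

theorem continuousWithinAt_Ici (hp : IsRealPyramid p) (x : ℝ) :
    ContinuousWithinAt p (Ici x) x :=
  hp.2.2.2.2.1 x

theorem map_le_leftLim_add_one (hp : IsRealPyramid p) (x : ℝ) : p x ≤ leftLim p x + 1 := by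
  have := abs_le.1 (hp.2.2.2.2.2.2 x)
  omega

theorem leftLim_le_map_add_one (hp : IsRealPyramid p) (x : ℝ) : leftLim p x ≤ p x + 1 := by
  have := abs_le.1 (hp.2.2.2.2.2.2 x)
  omega

theorem ordConnected_superlevel (hp : IsRealPyramid p) (k : ℕ) :
    {x | k ≤ p x}.OrdConnected := by
  refine ⟨fun x hx z hz y ⟨hxy, hyz⟩ => ?_⟩
  rcases le_total y 0 with hy | hy
  · exact le_trans hx (hp.monotoneOn_Iic (hxy.trans hy) hy hxy)
  · exact le_trans hz (hp.antitoneOn_Ici hy (hy.trans hyz) hyz)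

theorem isBounded_superlevel (hp : IsRealPyramid p) {k : ℕ} (hk : 1 ≤ k) :
    Bornology.IsBounded {x | k ≤ p x} := by
  obtain ⟨M, hM⟩ := hp.1
  refine (Metric.isBounded_Icc (-M) M).subset fun x (hx : k ≤ p x) => ?_
  have hxM : |x| < M := by
    by_contra! h
    have := hM x h
    omega
  exact abs_le.1 hxM.le

theorem superlevel_eq_Ico (hp : IsRealPyramid p) {k : ℕ} (hk : 1 ≤ k) (hk0 : k ≤ p 0) :
    {x | k ≤ p x} = Ico (sInf {x | k ≤ p x}) (sSup {x | k ≤ p x}) :=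
  preimage_eq_Ico_of_continuousWithinAt_Ici (T := Ici k) hp.continuousWithinAt_Ici
    (hp.ordConnected_superlevel k) ⟨0, hk0⟩ (hp.isBounded_superlevel hk)

theorem lt_of_superlevel_eq_Ico (hp : IsRealPyramid p) {k l : ℕ} {a b a' b' : ℝ} (hkl : k < l)
    (hl : l ≤ p 0) (h : {x | k ≤ p x} = Ico a b) (h' : {x | l ≤ p x} = Ico a' b') :
    a < a' ∧ b' < b := by
  have h0 : (0 : ℝ) ∈ Ico a' b' := h' ▸ hl
  have hsub : Ico a' b' ⊆ Ico a b := h' ▸ h ▸ fun x hx => hkl.le.trans hx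
  obtain ⟨haa, hbb⟩ := (Ico_subset_Ico_iff (h0.1.trans_lt h0.2)).1 hsub
  have hlow : ∀ x, x ∉ Ico a b → p x < k := fun x hx => by
    rw [← h] at hx
    simpa using hx
  have hhigh : ∀ x ∈ Ico a' b', l ≤ p x := fun x hx => by
    rw [← h'] at hx
    exact hx
  have hk : 1 ≤ k := Nat.one_le_of_lt (hlow (a - 1) fun hx => by linarith [hx.1])
  constructor
  · refine haa.lt_of_ne fun heq => ?_
    have hleft : leftLim p a' ≤ k - 1 :=
      (hp.monotoneOn_Iic.mono (Iio_subset_Iic_iff.2 h0.1)).leftLim_le_of_forall_lt fun x hx =>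
        Nat.le_sub_one_of_lt (hlow x fun hx' => hx.not_ge (heq ▸ hx'.1))
    have := hhigh a' ⟨le_rfl, h0.1.trans_lt h0.2⟩
    have := hp.map_le_leftLim_add_one a'
    omega
  · refine hbb.lt_of_ne fun heq => ?_
    have hright : l ≤ leftLim p b' :=
      (hp.antitoneOn_Ici.mono fun _ hx => hx.1.le).le_leftLim_of_forall_mem_Ioo h0.2
        fun x hx => hhigh x ⟨h0.1.trans hx.1.le, hx.2⟩
    have := hlow b' fun hb => hb.2.ne heq
    have := hp.leftLim_le_map_add_one b'
    omega

end IsRealPyramid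

/-- a nonzero real pyramid `p` with `s := p 0 ≥ 1` is the sum of the indicator
functions of `s` strictly nested intervals `[a_i, b_i)` with
`a_1 < ⋯ < a_s ≤ 0 < b_s < ⋯ < b_1` (pairwise distinct endpoints). -/
theorem pyramid_eq_sum_nested_intervals (p : ℝ → ℕ) (hp : IsRealPyramid p)
    (hne : p ≠ fun _ => 0) :
    1 ≤ p 0 ∧
      ∃ a b : Fin (p 0) → ℝ, StrictMono a ∧ StrictAnti b ∧
        (∀ i, a i ≤ 0) ∧ (∀ i, 0 < b i) ∧
        ∀ x, p x = ∑ i : Fin (p 0), ind (a i) (b i) x := by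
  have hs : 1 ≤ p 0 := by
    by_contra! h
    exact hne (funext fun x => by have := hp.le_map_zero x; omega)
  set S : ℕ → Set ℝ := fun k => {x | k ≤ p x}
  have hS (i : Fin (p 0)) : S (i + 1) = Ico (sInf (S (i + 1))) (sSup (S (i + 1))) :=
    hp.superlevel_eq_Ico (Nat.le_add_left 1 i) i.isLt
  have h0 (i : Fin (p 0)) : (0 : ℝ) ∈ Ico (sInf (S (i + 1))) (sSup (S (i + 1))) :=
    hS i ▸ i.isLt
  refine ⟨hs, fun i => sInf (S (i + 1)), fun i => sSup (S (i + 1)),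
    fun i j hij => (hp.lt_of_superlevel_eq_Ico (by simpa) j.isLt (hS i) (hS j)).1,
    fun i j hij => (hp.lt_of_superlevel_eq_Ico (by simpa) j.isLt (hS i) (hS j)).2,
    fun i => (h0 i).1, fun i => (h0 i).2, fun x => ?_⟩
  simp only [ind, indicator_apply, ← hS]
  exact (Fin.sum_ite_val_lt (hp.le_map_zero x)).symm
end
end

section
/- Let p be a real pyramid and let a < b be real numbers. Then the set {m ∈ ℤ : the interval [a+m, b+m) is addable or removable for p} is finite. -/
noncomputable section
open Function
open scoped Classical

/-- for a real pyramid `p` and reals `a < b`, only finitely many integer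
translates `[a + m, b + m)` of the interval `[a, b)` are addable or removable for `p`. -/
theorem finitely_many_addable_or_removable_translates (p : ℝ → ℕ) (hp : IsRealPyramid p)
    (a b : ℝ) (hab : a < b) :
    {m : ℤ | Addable p (a + m) (b + m) ∨ Removable p (a + m) (b + m)}.Finite := by
  obtain ⟨⟨M, hM⟩, -⟩ := hp
  set M' : ℝ := max M 0 with hM'def
  have hM'M : M ≤ M' := le_max_left _ _
  have hM'0 : (0:ℝ) ≤ M' := le_max_right _ _
  apply Set.Finite.subset (Set.finite_Icc ⌈-M' - b⌉ ⌊M' - a⌋)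
  intro m hm
  simp only [Set.mem_Icc]
  constructor
  · rw [Int.ceil_le]
    by_contra h
    push_neg at h
    have hb : b + (m:ℝ) < -M' := by linarith
    have ha : a + (m:ℝ) < -M' := by linarith
    have hpb : p (b + m) = 0 := hM _ (by rw [abs_of_nonpos (by linarith)]; linarith)
    have hpa : p (a + m) = 0 := hM _ (by rw [abs_of_nonpos (by linarith)]; linarith)
    rcases hm with hadd | hrem
    · obtain ⟨-, -, hmono, -⟩ := hadd
      have h1 : ind (a+(m:ℝ)) (b+(m:ℝ)) (a+(m:ℝ)) = 1 := by
        simp [ind, Set.indicator_apply, Set.mem_Ico]; linarith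
      have h2 : ind (a+(m:ℝ)) (b+(m:ℝ)) (b+(m:ℝ)) = 0 := by
        simp [ind, Set.indicator_apply, Set.mem_Ico]
      have := hmono (x := a + (m:ℝ)) (y := b + (m:ℝ)) (by linarith) (by linarith)
      simp only [h1, h2, hpa, hpb] at this
      omega
    · have := hrem.1 (a + (m:ℝ)) ⟨le_refl _, by linarith⟩
      omega
  · rw [Int.le_floor]
    by_contra h
    push_neg at h
    have ha : M' < a + (m:ℝ) := by linarith
    have hpa : p (a + m) = 0 := hM _ (by rw [abs_of_nonneg (by linarith)]; linarith)
    have hpM : p M' = 0 := hM _ (by rw [abs_of_nonneg hM'0]; linarith)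
    rcases hm with hadd | hrem
    · obtain ⟨-, -, -, hanti, -⟩ := hadd
      have h1 : ind (a+(m:ℝ)) (b+(m:ℝ)) (a+(m:ℝ)) = 1 := by
        simp [ind, Set.indicator_apply, Set.mem_Ico]; linarith
      have h2 : ind (a+(m:ℝ)) (b+(m:ℝ)) M' = 0 := by
        simp [ind, Set.indicator_apply, Set.mem_Ico]; intro hc; linarith
      have := hanti (x := M') (y := a + (m:ℝ)) hM'0 (by linarith)
      simp only [h1, h2, hpa, hpM] at this
      omega
    · have := hrem.1 (a + (m:ℝ)) ⟨le_refl _, by linarith⟩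
      omega
end
end

section
/- Let A be an associative (not necessarily commutative) ring, let v be a central invertible element of A, let E₁, E₂ ∈ A, and set X := v·E₁·E₂ − E₂·E₁. Then: (i) if v·E₂·X = X·E₂, the quantum Serre relation E₁·E₂² − (v + v⁻¹)·E₂·E₁·E₂ + E₂²·E₁ = 0 holds; and (ii) if E₁·X = v·X·E₁, the quantum Serre relation E₁²·E₂ − (v + v⁻¹)·E₁·E₂·E₁ + E₂·E₁² = 0 holds. (This is the algebraic content of the fact that the join and nest relations of the line quantum group imply the cubic Serre relations, the element X playing the role of v^{1/2}·E_{J₁∪J₂}.) -/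
/-- in an associative ring `A` with a central invertible element `v`
(with two-sided inverse `w`), setting `X := v·E₁·E₂ − E₂·E₁`:
(i) if `v·E₂·X = X·E₂` then `E₁E₂² − (v + v⁻¹)E₂E₁E₂ + E₂²E₁ = 0`, and
(ii) if `E₁·X = v·X·E₁` then `E₁²E₂ − (v + v⁻¹)E₁E₂E₁ + E₂E₁² = 0`. -/
theorem quantum_serre_of_join_nest {A : Type*} [Ring A] (v w : A)
    (hvw : v * w = 1) (hwv : w * v = 1) (hcentral : ∀ x : A, v * x = x * v)
    (E₁ E₂ : A) :
    (v * E₂ * (v * E₁ * E₂ - E₂ * E₁) = (v * E₁ * E₂ - E₂ * E₁) * E₂ →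
      E₁ * E₂ ^ 2 - (v + w) * (E₂ * E₁ * E₂) + E₂ ^ 2 * E₁ = 0) ∧
    (E₁ * (v * E₁ * E₂ - E₂ * E₁) = v * ((v * E₁ * E₂ - E₂ * E₁) * E₁) →
      E₁ ^ 2 * E₂ - (v + w) * (E₁ * E₂ * E₁) + E₂ * E₁ ^ 2 = 0) := by
  constructor
  · intro h
    have h2 := congrArg (w * ·) h
    simp only [mul_sub, sub_mul, ← mul_assoc, ← hcentral, hwv, hvw, one_mul, mul_one,
      pow_two, add_mul] at h2 ⊢
    linear_combination (norm := abel) -h2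
  · intro h
    have h2 := congrArg (w * ·) h
    simp only [mul_sub, sub_mul, ← mul_assoc, ← hcentral, hwv, hvw, one_mul, mul_one,
      pow_two, add_mul] at h2 ⊢
    linear_combination (norm := abel) h2
end
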